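/- Let B be a regular local ring with a p-cyclic group G of local automorphisms, k_A → k_B an isomorphism, and (y₁,…,y_d) generators of m_B. If the augmentation ideal I_G is principal, then there exists an index i with I_G = B·(σ(y_i) − y_i). -/

import Mathlib

/-- A noetherian local ring is regular if its maximal ideal is generated by
`dim R` elements. -/
def IsRegularLocal (R : Type*) [CommRing R] [IsLocalRing R] : Prop :=
  IsNoetherianRing R ∧ ∃ s : Finset R,
    Ideal.span (s : Set R) = IsLocalRing.maximalIdeal R ∧
    (s.card : WithBot (WithTop ℕ)) = ringKrullDim R

/-!
Since `σ(cu) - cu = c(σu - u) + σu(σc - c)`, every `σm - m` with `m ∈ m_B` lies in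
`J + m_B·I_G`, where `J` is generated by the `σyᵢ - yᵢ`. As `k_A ≅ k_B`, each `b ∈ B` differs
from a `σ`-invariant element by an element of `m_B`, so `I_G` is generated by such `σm - m`;
hence `I_G ⊆ J + m_B·I_G` and Nakayama gives `I_G = J`. Finally, among finitely many
generators of a principal ideal of a local ring, one alone generates it.
-/

open IsLocalRing

namespace RingEquiv

variable {B : Type*} [CommRing B] (σ : B ≃+* B)

def augmentationIdeal : Ideal B :=
  Ideal.span {x | ∃ (k : ℕ) (b : B), x = (σ ^ k) b - b}

theorem apply_sub_self_mem_augmentationIdeal (b : B) : σ b - b ∈ σ.augmentationIdeal :=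
  Ideal.subset_span ⟨1, b, by simp⟩

variable {σ}

theorem pow_apply_sub_self_mem {S : Set B} {T : Ideal B} (hS : ∀ s ∈ S, σ s ∈ S)
    (hT : ∀ s ∈ S, σ s - s ∈ T) (k : ℕ) {s : B} (hs : s ∈ S) : (σ ^ k) s - s ∈ T := by
  induction k generalizing s with
  | zero => simp
  | succ k ih =>
    have hsplit : (σ ^ (k + 1)) s - s = ((σ ^ k) (σ s) - σ s) + (σ s - s) := by
      rw [pow_succ, RingAut.mul_apply]
      ring
    rw [hsplit]
    exact add_mem (ih (hS s hs)) (hT s hs)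

theorem augmentationIdeal_le {M T : Ideal B} (hM : ∀ m ∈ M, σ m ∈ M)
    (hres : ∀ b, ∃ a, σ a = a ∧ b - a ∈ M) (hT : ∀ m ∈ M, σ m - m ∈ T) :
    σ.augmentationIdeal ≤ T := by
  refine Ideal.span_le.mpr ?_
  rintro _ ⟨k, b, rfl⟩
  obtain ⟨a, ha, hba⟩ := hres b
  have hfix : (σ ^ k) a = a := by
    rw [RingAut.coe_pow]
    exact Function.iterate_fixed ha k
  have hshift : (σ ^ k) b - b = (σ ^ k) (b - a) - (b - a) := by
    rw [map_sub, hfix]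
    ring
  rw [hshift]
  exact pow_apply_sub_self_mem hM hT k hba

theorem apply_sub_self_mem_span_sup_smul {ι : Type*} {y : ι → B} {M : Ideal B}
    (hy : Ideal.span (Set.range y) = M) (hM : ∀ m ∈ M, σ m ∈ M) {m : B} (hm : m ∈ M) :
    σ m - m ∈ Ideal.span (Set.range fun i => σ (y i) - y i) ⊔ M • σ.augmentationIdeal := by
  rw [← hy] at hm
  induction hm using Submodule.span_induction with
  | mem x hx =>
    obtain ⟨i, rfl⟩ := hx
    exact Ideal.mem_sup_left (Ideal.subset_span ⟨i, rfl⟩)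
  | zero => simp
  | add u v _ _ hu hv =>
    rw [map_add, add_sub_add_comm]
    exact add_mem hu hv
  | smul c u hu ih =>
    have hσu : σ u * (σ c - c) ∈ M • σ.augmentationIdeal :=
      Ideal.mul_mem_mul (hM u (hy ▸ hu)) (σ.apply_sub_self_mem_augmentationIdeal c)
    have hleibniz : σ (c • u) - c • u = c * (σ u - u) + σ u * (σ c - c) := by
      rw [smul_eq_mul, map_mul]
      ring
    rw [hleibniz]
    exact add_mem (Ideal.mul_mem_left _ c ih) (Ideal.mem_sup_right hσu)

theorem augmentationIdeal_eq_span_range [IsLocalRing B] [IsNoetherianRing B]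
    (hloc : ∀ b ∈ maximalIdeal B, σ b ∈ maximalIdeal B)
    (hres : ∀ b, ∃ a, σ a = a ∧ b - a ∈ maximalIdeal B)
    {ι : Type*} {y : ι → B} (hy : Ideal.span (Set.range y) = maximalIdeal B) :
    σ.augmentationIdeal = Ideal.span (Set.range fun i => σ (y i) - y i) := by
  refine le_antisymm ?_ (Ideal.span_le.mpr ?_)
  · exact Submodule.le_of_le_smul_of_le_jacobson_bot (IsNoetherian.noetherian _)
      (maximalIdeal_le_jacobson ⊥)
      (augmentationIdeal_le hloc hres fun _ => apply_sub_self_mem_span_sup_smul hy hloc)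
  · rintro _ ⟨i, rfl⟩
    exact σ.apply_sub_self_mem_augmentationIdeal (y i)

end RingEquiv

theorem Ideal.exists_eq_span_singleton_of_isPrincipal {R : Type*} [CommRing R] [IsLocalRing R]
    {ι : Type*} [Fintype ι] [Nonempty ι] {g : ι → R} {I : Ideal R}
    (hI : I = Ideal.span (Set.range g)) (hprin : I.IsPrincipal) :
    ∃ i, I = Ideal.span {g i} := by
  obtain ⟨x, hx⟩ := hprin
  subst hI
  have hgx : ∀ i, ∃ b, b * x = g i := by
    intro i
    have hgi : g i ∈ R ∙ x := by
      rw [← hx]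
      exact Ideal.subset_span ⟨i, rfl⟩
    exact Ideal.mem_span_singleton'.mp hgi
  choose b hb using hgx
  have hxg : x ∈ Ideal.span (Set.range g) := by
    rw [hx]
    exact Submodule.mem_span_singleton_self x
  obtain ⟨c, hc⟩ := Ideal.mem_span_range_iff_exists_fun.mp hxg
  by_cases hunit : ∃ i, IsUnit (b i)
  · obtain ⟨i, hi⟩ := hunit
    exact ⟨i, by rw [hx, ← hb i, Ideal.span_singleton_mul_left_unit hi]⟩
  · push Not at hunit
    have hsum : ∑ i, c i * b i ∈ maximalIdeal R :=
      Ideal.sum_mem _ fun i _ => Ideal.mul_mem_left _ _ (hunit i)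
    have hx0 : x = 0 := by
      refine ((isUnit_one_sub_self_of_mem_nonunits _ hsum).mul_right_eq_zero).mp ?_
      simp only [sub_mul, one_mul, Finset.sum_mul, mul_assoc, hb, hc, sub_self]
    refine ⟨Classical.arbitrary ι, ?_⟩
    rw [hx, ← hb, hx0, mul_zero]

/-- For a `p`-cyclic action by local automorphisms on a regular local ring `B`
with `k_A ≅ k_B` and generators `(y₁, …, y_d)` of `m_B`: if the augmentation
ideal is principal, then `I_G = B·(σ(yᵢ) − yᵢ)` for some index `i`. -/
theorem augmentation_generator_among_parameters
    {B : Type*} [CommRing B] [IsLocalRing B] (hreg : IsRegularLocal B)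
    (p : ℕ) (hp : p.Prime) (σ : B ≃+* B) (horder : orderOf σ = p)
    (hloc : ∀ b ∈ IsLocalRing.maximalIdeal B, σ b ∈ IsLocalRing.maximalIdeal B)
    (A : Subring B) (hA : A = RingHom.eqLocus (σ : B →+* B) (RingHom.id B))
    (hres : ∀ b : B, ∃ a ∈ A, b - a ∈ IsLocalRing.maximalIdeal B)
    (d : ℕ) (y : Fin d → B)
    (hy : Ideal.span (Set.range y) = IsLocalRing.maximalIdeal B)
    (IG : Ideal B) (hIG : IG = Ideal.span {x | ∃ (k : ℕ) (b : B), x = (σ ^ k) b - b})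
    (hprin : IG.IsPrincipal) :
    ∃ i : Fin d, IG = Ideal.span {σ (y i) - y i} := by
  have : IsNoetherianRing B := hreg.1
  have hfix : ∀ b, ∃ a, σ a = a ∧ b - a ∈ maximalIdeal B := by
    subst hA
    exact hres
  have : Nonempty (Fin d) := by
    rw [← Fin.pos_iff_nonempty, Nat.pos_iff_ne_zero]
    rintro rfl
    -- with `d = 0` the ring `B` is a field, which `hfix` forces `σ` to fix pointwise
    have hσ : σ = 1 := by
      ext b
      obtain ⟨a, ha, hba⟩ := hfix b
      rw [← hy, Set.range_eq_empty, Ideal.span_empty, Ideal.mem_bot, sub_eq_zero] at hba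
      rw [hba, ha]
      rfl
    rw [hσ, orderOf_one] at horder
    exact hp.one_lt.ne horder
  exact Ideal.exists_eq_span_singleton_of_isPrincipal
    (hIG.trans (σ.augmentationIdeal_eq_span_range hloc hfix hy)) hprin
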